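/- Let a₁, a₂, a₃, a₄, a₅ ∈ ℂ be all nonzero and α, β, γ ∈ ℂ. If all nine quadrics Q₀, Q₁, Q₂, Q₀′, Q₁′, Q₂′, Q₀″, Q₁″, Q₂″ vanish at the point (x₀,…,x₅) = (0, a₁, a₂, a₃, a₄, a₅), then αβ(α+β) = −2 and γ = αβ. -/

import Mathlib

open MvPolynomial

noncomputable section

abbrev R6 : Type := MvPolynomial (Fin 6) ℂ

def Q0 (α : ℂ) : R6 := X 0 ^ 2 + X 3 ^ 2 + C α * (X 2 * X 4 + X 5 * X 1)
def Q1 (α : ℂ) : R6 := X 1 ^ 2 + X 4 ^ 2 + C α * (X 3 * X 5 + X 0 * X 2)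
def Q2 (α : ℂ) : R6 := X 2 ^ 2 + X 5 ^ 2 + C α * (X 4 * X 0 + X 1 * X 3)
def Q0' (β : ℂ) : R6 := X 0 ^ 2 - X 3 ^ 2 + C β * (X 2 * X 4 - X 5 * X 1)
def Q1' (β : ℂ) : R6 := X 1 ^ 2 - X 4 ^ 2 + C β * (X 3 * X 5 - X 0 * X 2)
def Q2' (β : ℂ) : R6 := X 2 ^ 2 - X 5 ^ 2 + C β * (X 4 * X 0 - X 1 * X 3)
def Q0'' (γ : ℂ) : R6 := X 0 * X 1 + X 3 * X 4 + C γ * (X 2 * X 5)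
def Q1'' (γ : ℂ) : R6 := X 1 * X 2 + X 4 * X 5 + C γ * (X 3 * X 0)
def Q2'' (γ : ℂ) : R6 := X 2 * X 3 + X 5 * X 0 + C γ * (X 4 * X 1)

/-!
At `x₀ = 0`, put `s = α + β`. Sums and differences of the `Qᵢ` and `Qᵢ′` give
`2a₁² = -s a₃a₅`, `2a₅² = -s a₁a₃` and `s a₃² = -2αβ a₁a₅`. The product of the first two is
`4a₁a₅ = s² a₃²`, which turns the third into `αβs = -2`. Eliminating `a₄` between `Q₀″` and `Q₁″`
gives `γ a₅² = a₁a₃`, hence also `γs = -2`; finally `s ≠ 0` since `2a₅² = -s a₁a₃` and `a₅ ≠ 0`.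
-/

section FieldIdentities

variable {K : Type*} [Field K]

theorem ne_zero_of_two_mul_sq_add_eq_zero [NeZero (2 : K)] {s a b c : K}
    (h : 2 * a ^ 2 + s * (b * c) = 0) (ha : a ≠ 0) : s ≠ 0 := by
  rintro rfl
  exact ha (by simpa [two_ne_zero] using h)

theorem four_mul_mul_eq_sq_mul_sq {s a b c : K}
    (hab : 2 * a ^ 2 + s * (b * c) = 0) (hcb : 2 * c ^ 2 + s * (a * b) = 0)
    (ha : a ≠ 0) (hc : c ≠ 0) : 4 * (a * c) = s ^ 2 * b ^ 2 := by
  have h : a * c * (4 * (a * c) - s ^ 2 * b ^ 2) = 0 := by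
    linear_combination (2 * c ^ 2) * hab - (s * b * c) * hcb
  exact sub_eq_zero.mp ((mul_eq_zero.mp h).resolve_left (mul_ne_zero ha hc))

theorem mul_mul_add_eq_neg_two {α β a b c : K}
    (hab : 2 * a ^ 2 + (α + β) * (b * c) = 0) (hcb : 2 * c ^ 2 + (α + β) * (a * b) = 0)
    (hb2 : (α + β) * b ^ 2 + 2 * (α * β) * (a * c) = 0)
    (ha : a ≠ 0) (hb : b ≠ 0) (hc : c ≠ 0) (hs : α + β ≠ 0) :
    α * β * (α + β) = -2 := by
  have hac := four_mul_mul_eq_sq_mul_sq hab hcb ha hc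
  have h : (α + β) * b ^ 2 * (α * β * (α + β) + 2) = 0 := by
    linear_combination 2 * hb2 - (α * β) * hac
  exact eq_neg_of_add_eq_zero_left
    ((mul_eq_zero.mp h).resolve_left (mul_ne_zero hs (pow_ne_zero 2 hb)))

theorem mul_eq_neg_two_of_mul_sq_eq {s γ a b c : K}
    (hcb : 2 * c ^ 2 + s * (a * b) = 0) (hγ : γ * c ^ 2 = a * b) (hc : c ≠ 0) :
    γ * s = -2 := by
  have h : c ^ 2 * (γ * s + 2) = 0 := by linear_combination s * hγ + hcb
  exact eq_neg_of_add_eq_zero_left ((mul_eq_zero.mp h).resolve_left (pow_ne_zero 2 hc))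

end FieldIdentities

theorem relations_between_constants_general (a₁ a₂ a₃ a₄ a₅ : ℂ)
    (h₁ : a₁ ≠ 0) (h₃ : a₃ ≠ 0) (h₄ : a₄ ≠ 0) (h₅ : a₅ ≠ 0)
    (α β γ : ℂ)
    (hQ0 : eval ![0, a₁, a₂, a₃, a₄, a₅] (Q0 α) = 0)
    (hQ1 : eval ![0, a₁, a₂, a₃, a₄, a₅] (Q1 α) = 0)
    (hQ2 : eval ![0, a₁, a₂, a₃, a₄, a₅] (Q2 α) = 0)
    (hQ0' : eval ![0, a₁, a₂, a₃, a₄, a₅] (Q0' β) = 0)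
    (hQ1' : eval ![0, a₁, a₂, a₃, a₄, a₅] (Q1' β) = 0)
    (hQ2' : eval ![0, a₁, a₂, a₃, a₄, a₅] (Q2' β) = 0)
    (hQ0'' : eval ![0, a₁, a₂, a₃, a₄, a₅] (Q0'' γ) = 0)
    (hQ1'' : eval ![0, a₁, a₂, a₃, a₄, a₅] (Q1'' γ) = 0) :
    α * β * (α + β) = -2 ∧ γ = α * β := by
  simp only [Q0, Q1, Q2, Q0', Q1', Q2', Q0'', Q1'', map_add, map_sub, map_mul, map_pow,
    eval_C, eval_X, Matrix.cons_val] at hQ0 hQ1 hQ2 hQ0' hQ1' hQ2' hQ0'' hQ1''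
  have h₁₃₅ : 2 * a₁ ^ 2 + (α + β) * (a₃ * a₅) = 0 := by linear_combination hQ1 + hQ1'
  have h₅₁₃ : 2 * a₅ ^ 2 + (α + β) * (a₁ * a₃) = 0 := by linear_combination hQ2 - hQ2'
  have h₃₁₅ : (α + β) * a₃ ^ 2 + 2 * (α * β) * (a₁ * a₅) = 0 := by
    linear_combination β * hQ0 - α * hQ0'
  have hγ : γ * a₅ ^ 2 = a₁ * a₃ := by
    have h : a₄ * (a₁ * a₃ - γ * a₅ ^ 2) = 0 := by
      linear_combination a₁ * hQ0'' - γ * a₅ * hQ1''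
    exact (sub_eq_zero.mp ((mul_eq_zero.mp h).resolve_left h₄)).symm
  have hs : α + β ≠ 0 := ne_zero_of_two_mul_sq_add_eq_zero h₅₁₃ h₅
  have hαβ := mul_mul_add_eq_neg_two h₁₃₅ h₅₁₃ h₃₁₅ h₁ h₃ h₅ hs
  have hγs := mul_eq_neg_two_of_mul_sq_eq h₅₁₃ hγ h₅
  exact ⟨hαβ, mul_right_cancel₀ hs (hγs.trans hαβ.symm)⟩

/-- If the nine quadrics all vanish at `(0, a₁, a₂, a₃, a₄, a₅)` with all `aᵢ ≠ 0`, then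
`αβ(α+β) = −2` and `γ = αβ`. -/
theorem relations_between_constants (a₁ a₂ a₃ a₄ a₅ : ℂ)
    (h₁ : a₁ ≠ 0) (h₂ : a₂ ≠ 0) (h₃ : a₃ ≠ 0) (h₄ : a₄ ≠ 0) (h₅ : a₅ ≠ 0)
    (α β γ : ℂ)
    (hQ0 : eval ![0, a₁, a₂, a₃, a₄, a₅] (Q0 α) = 0)
    (hQ1 : eval ![0, a₁, a₂, a₃, a₄, a₅] (Q1 α) = 0)
    (hQ2 : eval ![0, a₁, a₂, a₃, a₄, a₅] (Q2 α) = 0)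
    (hQ0' : eval ![0, a₁, a₂, a₃, a₄, a₅] (Q0' β) = 0)
    (hQ1' : eval ![0, a₁, a₂, a₃, a₄, a₅] (Q1' β) = 0)
    (hQ2' : eval ![0, a₁, a₂, a₃, a₄, a₅] (Q2' β) = 0)
    (hQ0'' : eval ![0, a₁, a₂, a₃, a₄, a₅] (Q0'' γ) = 0)
    (hQ1'' : eval ![0, a₁, a₂, a₃, a₄, a₅] (Q1'' γ) = 0)
    (hQ2'' : eval ![0, a₁, a₂, a₃, a₄, a₅] (Q2'' γ) = 0) :
    α * β * (α + β) = -2 ∧ γ = α * β :=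
  relations_between_constants_general a₁ a₂ a₃ a₄ a₅ h₁ h₃ h₄ h₅ α β γ hQ0 hQ1 hQ2 hQ0' hQ1' hQ2'
    hQ0'' hQ1''
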